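/- arXiv:1209.6273 — 5 statements merged into one kernel-verified Lean document; each statement's English description precedes it below -/
import Mathlib

section
/- For all n ≥ 1 and all i with 1 ≤ i ≤ n, the number of permutations of {1,...,n} with exactly i-1 descents equals the number of permutations of {1,...,n} with exactly i-1 excedances, where an excedance of w is an index r ∈ {1,...,n} with w(r) > r. -/
/-- The descent number of a permutation of `Fin n`. -/
def des {n : ℕ} (w : Equiv.Perm (Fin n)) : ℕ :=
  (Finset.univ.filter fun r : Fin n =>
    ∃ s : Fin n, (s : ℕ) = (r : ℕ) + 1 ∧ w s < w r).card

/-- The excedance number of a permutation of `Fin n`: the number of indices `r`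
with `w r > r`. -/
def exc {n : ℕ} (w : Equiv.Perm (Fin n)) : ℕ :=
  (Finset.univ.filter fun r : Fin n => r < w r).card

/-!
Foata's fundamental transformation. Cut the one-line word `w 0, w 1, …, w (n-1)` before each
left-to-right maximum and read every block as a cycle; this gives a permutation `foata w`, and
`w ↦ foata w` is injective because `w` can be read back from the right: once `w` is known on the
positions after `j`, so is the largest of the values `w 0, …, w j`, hence so is `foata w (w j)`.
Inside a block `foata w` sends `w j` to `w (j + 1)`, and the last entry of a block is sent to the
block's maximum, which is also smaller than the next entry. So the drops of `foata w` are exactly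
the descents of `w`, and the drops of a permutation are the excedances of its inverse.
-/

section Foata

open Finset

variable {n : ℕ}

def prefixMax {α : Type*} [LinearOrder α] (f : Fin n → α) (j : Fin n) : α :=
  (Iic j).sup' nonempty_Iic f

lemma le_prefixMax {α : Type*} [LinearOrder α] (f : Fin n → α) {j k : Fin n} (hk : k ≤ j) :
    f k ≤ prefixMax f j :=
  le_sup' f (mem_Iic.mpr hk)

lemma prefixMax_mono {α : Type*} [LinearOrder α] (f : Fin n → α) {i j : Fin n} (hij : i ≤ j) :
    prefixMax f i ≤ prefixMax f j :=
  sup'_mono f (Iic_subset_Iic.mpr hij) nonempty_Iic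

lemma exists_prefixMax_eq {α : Type*} [LinearOrder α] (f : Fin n → α) (j : Fin n) :
    ∃ k ≤ j, prefixMax f j = f k := by
  obtain ⟨k, hk, h⟩ := exists_mem_eq_sup' nonempty_Iic f
  exact ⟨k, mem_Iic.mp hk, h⟩

/-- Since `w₂` agrees with `w₁` after `j`, it takes each of the values `w₁ 0, …, w₁ j` at a
position `≤ j` as well. -/
lemma prefixMax_le_of_eqOn_Ioi {w₁ w₂ : Equiv.Perm (Fin n)} {j : Fin n}
    (h : ∀ k, j < k → w₁ k = w₂ k) : prefixMax w₁ j ≤ prefixMax w₂ j := by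
  refine sup'_le _ _ fun k hk => ?_
  have hm : w₂.symm (w₁ k) ≤ j := by
    by_contra! hjm
    have := h _ hjm
    rw [Equiv.apply_symm_apply, w₁.injective.eq_iff] at this
    exact (mem_Iic.mp hk).not_gt (this ▸ hjm)
  simpa using le_prefixMax w₂ hm

lemma prefixMax_eq_of_eqOn_Ioi {w₁ w₂ : Equiv.Perm (Fin n)} {j : Fin n}
    (h : ∀ k, j < k → w₁ k = w₂ k) : prefixMax w₁ j = prefixMax w₂ j :=
  (prefixMax_le_of_eqOn_Ioi h).antisymm
    (prefixMax_le_of_eqOn_Ioi fun k hk => (h k hk).symm)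

/-- The image of `w j` under `foata w`. The entry `w (j + 1)` starts a new block exactly when it
exceeds `prefixMax w j`, so the minimum is the next entry inside a block and the block's maximum
at its end. -/
def foataSucc (w : Equiv.Perm (Fin n)) (j : Fin n) : Fin n :=
  if h : (j : ℕ) + 1 < n then min (w ⟨j + 1, h⟩) (prefixMax w j) else prefixMax w j

lemma foataSucc_eq_or (w : Equiv.Perm (Fin n)) (j : Fin n) :
    foataSucc w j = prefixMax w j ∨ ∃ h : (j : ℕ) + 1 < n, foataSucc w j = w ⟨j + 1, h⟩ := by
  unfold foataSucc
  split_ifs with h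
  · exact (min_choice _ _).symm.imp id fun e => ⟨h, e⟩
  · exact Or.inl rfl

lemma foataSucc_injective (w : Equiv.Perm (Fin n)) : Function.Injective (foataSucc w) := by
  refine Function.Injective.of_lt_imp_ne fun a b hab hfab => ?_
  have hs : (a : ℕ) + 1 < n := by omega
  have hw_ne {k l : Fin n} (hkl : (k : ℕ) < l) : w k ≠ w l :=
    w.injective.ne (Fin.ne_of_lt (Fin.lt_def.mpr hkl))
  have hsb : w ⟨a + 1, hs⟩ ≤ prefixMax w b := le_prefixMax w (Fin.le_def.mpr hab)
  obtain ⟨k, hka, hk⟩ := exists_prefixMax_eq w a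
  have hfa : foataSucc w a = min (w ⟨a + 1, hs⟩) (prefixMax w a) := dif_pos hs
  rcases (hk ▸ hw_ne (Nat.lt_succ_of_le hka) : prefixMax w a ≠ w ⟨a + 1, hs⟩).lt_or_gt
    with hrec | hrec
  · rw [min_eq_right hrec.le, hfab] at hfa
    rcases foataSucc_eq_or w b with hfb | ⟨hb, hfb⟩ <;> rw [hfb] at hfa
    · exact (hrec.trans_le hsb).ne' hfa
    · exact hw_ne (Nat.lt_succ_of_le (hka.trans hab.le)) (hk ▸ hfa).symm
  · rw [min_eq_left hrec.le, hfab] at hfa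
    rcases foataSucc_eq_or w b with hfb | ⟨hb, hfb⟩ <;> rw [hfb] at hfa
    · exact (hrec.trans_le (prefixMax_mono w hab.le)).ne' hfa
    · exact hw_ne (Nat.succ_lt_succ hab) hfa.symm

noncomputable def foata (w : Equiv.Perm (Fin n)) : Equiv.Perm (Fin n) :=
  w.symm.trans (Equiv.ofBijective _ (Finite.injective_iff_bijective.mp (foataSucc_injective w)))

lemma foata_apply_apply (w : Equiv.Perm (Fin n)) (j : Fin n) :
    foata w (w j) = foataSucc w j := by
  simp [foata]

lemma foataSucc_lt_iff (w : Equiv.Perm (Fin n)) (j : Fin n) :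
    foataSucc w j < w j ↔ ∃ s : Fin n, (s : ℕ) = (j : ℕ) + 1 ∧ w s < w j := by
  have hj : ¬ prefixMax w j < w j := (le_prefixMax w le_rfl).not_gt
  unfold foataSucc
  split_ifs with h
  · rw [min_lt_iff, or_iff_left hj]
    exact ⟨fun hs => ⟨_, rfl, hs⟩, fun ⟨s, hs, hws⟩ => (Fin.ext hs : s = ⟨j + 1, h⟩) ▸ hws⟩
  · exact iff_of_false hj fun ⟨s, hs, _⟩ => h (hs ▸ s.isLt)

lemma card_foata_lt_eq_des (w : Equiv.Perm (Fin n)) :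
    #{v | foata w v < v} = des w :=
  (card_equiv w fun j => by simp [foata_apply_apply, foataSucc_lt_iff]).symm

lemma exc_inv (σ : Equiv.Perm (Fin n)) : exc σ⁻¹ = #{v | σ v < v} :=
  card_equiv σ.symm fun v => by simp [Equiv.Perm.inv_def]

lemma foataSucc_eq_of_eqOn_Ioi {w₁ w₂ : Equiv.Perm (Fin n)} {j : Fin n}
    (h : ∀ k, j < k → w₁ k = w₂ k) : foataSucc w₁ j = foataSucc w₂ j := by
  unfold foataSucc
  rw [prefixMax_eq_of_eqOn_Ioi h]
  split_ifs with hj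
  · rw [h _ (Fin.lt_def.mpr (Nat.lt_succ_self j))]
  · rfl

lemma foata_injective : Function.Injective (foata (n := n)) := by
  intro w₁ w₂ hw
  ext1 j
  induction j using WellFoundedGT.induction with
  | _ j ih =>
    apply (foata w₁).injective
    rw [foata_apply_apply, hw, foata_apply_apply]
    exact foataSucc_eq_of_eqOn_Ioi ih

end Foata

theorem card_des_eq_card_exc_general (n i : ℕ) :
    (Finset.univ.filter fun w : Equiv.Perm (Fin n) => des w = i - 1).card =
      (Finset.univ.filter fun w : Equiv.Perm (Fin n) => exc w = i - 1).card := by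
  have hinj : Function.Injective fun w : Equiv.Perm (Fin n) => (foata w)⁻¹ :=
    fun _ _ h => foata_injective (inv_injective h)
  refine Finset.card_equiv (Equiv.ofBijective _ (Finite.injective_iff_bijective.mp hinj))
    fun w => ?_
  simp [exc_inv, card_foata_lt_eq_des]

/-- The number of permutations with `i - 1` descents equals the number of
permutations with `i - 1` excedances. -/
theorem card_des_eq_card_exc (n i : ℕ) (hn : 1 ≤ n) (hi1 : 1 ≤ i) (hi2 : i ≤ n) :
    (Finset.univ.filter fun w : Equiv.Perm (Fin n) => des w = i - 1).card =
      (Finset.univ.filter fun w : Equiv.Perm (Fin n) => exc w = i - 1).card :=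
  card_des_eq_card_exc_general n i
end

section
/- Worpitzky's identity: for every n ≥ 1 and every nonnegative integer k, k^n = Σ_{i=1}^{n} A_{n,i} · C(k+n-i, n), where C(m, n) denotes the binomial coefficient. -/
/-- The Eulerian number `A_{n,i}`: the number of permutations of `Fin n`
with exactly `i - 1` descents. -/
def eulerianNum (n i : ℕ) : ℕ :=
  (Finset.univ.filter fun w : Equiv.Perm (Fin n) => des w = i - 1).card

/-!
Every `f : Fin n → Fin k` is stably sorted by a unique permutation `w = Tuple.sort f`, and
`f ∘ w` is then weakly increasing with a strict increase at every descent of `w`; conversely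
each such sequence `g` gives back `f = g ∘ w⁻¹`. Adding to `g r` the number of non-descents
before `r` turns these sequences bijectively into strictly increasing maps
`Fin n → Fin (k + n - 1 - des w)`, of which there are `C(k + n - 1 - des w, n)`.
Grouping the permutations by their number of descents gives the identity.
-/

open Finset

lemma Nat.card_orderEmbedding_fin (n N : ℕ) : Nat.card (Fin n ↪o Fin N) = N.choose n := by
  rw [Nat.card_congr Set.powersetCard.ofFinEmbEquiv, Set.powersetCard.card, Nat.card_fin]

section Compatible

variable {m : ℕ} (D : Finset (Fin m))

def IsCompatible {α : Type*} [Preorder α] (g : Fin (m + 1) → α) : Prop :=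
  ∀ i, if i ∈ D then g i.castSucc < g i.succ else g i.castSucc ≤ g i.succ

variable {D}

lemma IsCompatible.monotone {α : Type*} [Preorder α] {g : Fin (m + 1) → α}
    (hg : IsCompatible D g) : Monotone g :=
  Fin.monotone_iff_le_succ.2 fun i => by
    have := hg i
    split_ifs at this
    exacts [this.le, this]

lemma isCompatible_val_iff {k : ℕ} {g : Fin (m + 1) → Fin k} :
    IsCompatible D (fun r => (g r : ℕ)) ↔ IsCompatible D g := by
  simp only [IsCompatible, Fin.val_fin_lt, Fin.val_fin_le]

variable (D)

def weakStepsBefore (r : Fin (m + 1)) : ℕ := #{i ∈ Dᶜ | i.castSucc < r}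

@[simp]
lemma weakStepsBefore_zero : weakStepsBefore D 0 = 0 := by
  simp [weakStepsBefore]

lemma weakStepsBefore_succ (i : Fin m) :
    weakStepsBefore D i.succ = weakStepsBefore D i.castSucc + if i ∈ D then 0 else 1 := by
  have hsplit : {j ∈ Dᶜ | j.castSucc < i.succ} = {j ∈ Dᶜ | j < i} ∪ {j ∈ Dᶜ | j = i} := by
    ext j
    simp only [mem_union, mem_filter, Fin.castSucc_lt_succ_iff]
    grind
  rw [weakStepsBefore, weakStepsBefore, hsplit, card_union_of_disjoint, filter_eq']
  · split_ifs <;> simp_all [Fin.castSucc_lt_castSucc_iff]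
  · exact disjoint_filter.2 fun j _ hj => hj.ne

lemma weakStepsBefore_last : weakStepsBefore D (Fin.last m) = m - #D := by
  simp [weakStepsBefore, Fin.castSucc_lt_last, card_compl]

variable {D}

lemma isCompatible_iff_strictMono_add {g : Fin (m + 1) → ℕ} :
    IsCompatible D g ↔ StrictMono fun r => g r + weakStepsBefore D r := by
  rw [Fin.strictMono_iff_lt_succ]
  refine forall_congr' fun i => ?_
  rw [weakStepsBefore_succ]
  split_ifs <;> omega

lemma weakStepsBefore_le_of_strictMono {G : Fin (m + 1) → ℕ} (hG : StrictMono G)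
    (r : Fin (m + 1)) : weakStepsBefore D r ≤ G r := by
  induction r using Fin.induction with
  | zero => simp
  | succ i ih =>
    have hstep := hG (Fin.castSucc_lt_succ (i := i))
    rw [weakStepsBefore_succ]
    split_ifs <;> omega

lemma add_weakStepsBefore_lt {k : ℕ} {g : Fin (m + 1) → Fin k} (hg : IsCompatible D g)
    (r : Fin (m + 1)) : g r + weakStepsBefore D r < k + (m - #D) := by
  have hle := (isCompatible_iff_strictMono_add.1 (isCompatible_val_iff.2 hg)).monotone
    (Fin.le_last r)
  have hlast := (g (Fin.last m)).isLt
  rw [weakStepsBefore_last] at hle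
  omega

lemma isCompatible_sub_weakStepsBefore {G : Fin (m + 1) → ℕ} (hG : StrictMono G) :
    IsCompatible D fun r => G r - weakStepsBefore D r := by
  rw [isCompatible_iff_strictMono_add]
  convert hG using 2 with r
  exact Nat.sub_add_cancel (weakStepsBefore_le_of_strictMono hG r)

lemma sub_weakStepsBefore_lt {k : ℕ} (G : Fin (m + 1) ↪o Fin (k + (m - #D)))
    (r : Fin (m + 1)) : G r - weakStepsBefore D r < k := by
  have hle : G r - weakStepsBefore D r ≤ G (Fin.last m) - weakStepsBefore D (Fin.last m) :=
    (isCompatible_sub_weakStepsBefore (Fin.val_strictMono.comp G.strictMono)).monotone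
      (Fin.le_last r)
  have hlast := (G (Fin.last m)).isLt
  have hshift : weakStepsBefore D (Fin.last m) ≤ G (Fin.last m) :=
    weakStepsBefore_le_of_strictMono (Fin.val_strictMono.comp G.strictMono) _
  rw [weakStepsBefore_last] at hle hshift
  omega

variable (D) in
def compatibleEquivOrderEmbedding (k : ℕ) :
    {g : Fin (m + 1) → Fin k // IsCompatible D g} ≃ (Fin (m + 1) ↪o Fin (k + (m - #D))) where
  toFun g := OrderEmbedding.ofStrictMono
    (fun r => ⟨g.1 r + weakStepsBefore D r, add_weakStepsBefore_lt g.2 r⟩)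
    fun _ _ h => Fin.mk_lt_mk.2 <|
      isCompatible_iff_strictMono_add.1 (isCompatible_val_iff.2 g.2) h
  invFun G := ⟨fun r => ⟨G r - weakStepsBefore D r, sub_weakStepsBefore_lt G r⟩,
    isCompatible_val_iff.1 <|
      isCompatible_sub_weakStepsBefore (Fin.val_strictMono.comp G.strictMono)⟩
  left_inv g := by ext r; exact Nat.add_sub_cancel ..
  right_inv G := by
    ext r
    exact Nat.sub_add_cancel
      (weakStepsBefore_le_of_strictMono (Fin.val_strictMono.comp G.strictMono) r)

lemma card_isCompatible (k : ℕ) :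
    Nat.card {g : Fin (m + 1) → Fin k // IsCompatible D g} = (k + (m - #D)).choose (m + 1) := by
  rw [Nat.card_congr (compatibleEquivOrderEmbedding D k), Nat.card_orderEmbedding_fin]

end Compatible

section Descents

variable {m : ℕ}

def descentSet (w : Equiv.Perm (Fin (m + 1))) : Finset (Fin m) := {i | w i.succ < w i.castSucc}

lemma des_eq_card_descentSet (w : Equiv.Perm (Fin (m + 1))) : des w = #(descentSet w) := by
  refine (card_bij (fun i _ => i.castSucc) ?_
    (fun _ _ _ _ h => Fin.castSucc_injective _ h) ?_).symm
  · intro i hi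
    simp only [descentSet, mem_filter, mem_univ, true_and] at hi ⊢
    exact ⟨i.succ, by simp, hi⟩
  · simp only [descentSet, mem_filter, mem_univ, true_and, exists_prop]
    rintro r ⟨s, hs, hlt⟩
    have hr : (r : ℕ) < m := by omega
    refine ⟨⟨r, hr⟩, ?_, rfl⟩
    rwa [show (⟨r, hr⟩ : Fin m).succ = s from Fin.ext hs.symm]

lemma des_le (w : Equiv.Perm (Fin (m + 1))) : des w ≤ m := by
  simpa [des_eq_card_descentSet] using card_le_univ (descentSet w)

lemma sort_eq_iff_isCompatible {α : Type*} [LinearOrder α] (f : Fin (m + 1) → α)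
    (w : Equiv.Perm (Fin (m + 1))) :
    Tuple.sort f = w ↔ IsCompatible (descentSet w) (f ∘ w) := by
  rw [eq_comm, Tuple.eq_sort_iff', Fin.strictMono_iff_lt_succ]
  refine forall_congr' fun i => ?_
  change toLex (f (w i.castSucc), w i.castSucc) < toLex (f (w i.succ), w i.succ) ↔ _
  have hne : w i.castSucc ≠ w i.succ := w.injective.ne (Fin.castSucc_lt_succ).ne
  simp only [Prod.Lex.toLex_lt_toLex, descentSet, mem_filter, mem_univ, true_and,
    Function.comp_apply]
  split_ifs with h
  · simp [h.not_gt]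
  · simp [lt_of_le_of_ne (not_lt.1 h) hne, le_iff_lt_or_eq]

lemma card_sort_eq (k : ℕ) (w : Equiv.Perm (Fin (m + 1))) :
    Nat.card {f : Fin (m + 1) → Fin k // Tuple.sort f = w} =
      (k + (m - des w)).choose (m + 1) := by
  rw [des_eq_card_descentSet, ← card_isCompatible,
    Nat.card_congr ((Equiv.arrowCongr w.symm (Equiv.refl _)).subtypeEquiv
      fun f => sort_eq_iff_isCompatible f w)]

lemma pow_eq_sum_card_sort_eq (n k : ℕ) :
    k ^ n = ∑ w : Equiv.Perm (Fin n), Nat.card {f : Fin n → Fin k // Tuple.sort f = w} := by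
  rw [← Nat.card_sigma, Nat.card_congr (Equiv.sigmaFiberEquiv _), Nat.card_fun, Nat.card_fin,
    Nat.card_fin]

lemma sum_comp_des {M : Type*} [AddCommMonoid M] (F : ℕ → M) :
    ∑ w : Equiv.Perm (Fin (m + 1)), F (des w) =
      ∑ i ∈ Icc 1 (m + 1), eulerianNum (m + 1) i • F (i - 1) := by
  rw [← sum_fiberwise_of_maps_to (g := fun w => des w + 1) (t := Icc 1 (m + 1))
    fun w _ => mem_Icc.2 ⟨by omega, by have := des_le w; omega⟩]
  refine sum_congr rfl fun i hi => ?_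
  have hfiber : (univ.filter fun w : Equiv.Perm (Fin (m + 1)) => des w + 1 = i) =
      univ.filter fun w => des w = i - 1 :=
    filter_congr fun w _ => by have := (mem_Icc.1 hi).1; constructor <;> intro <;> omega
  rw [hfiber, eulerianNum, ← sum_const]
  exact sum_congr rfl fun w hw => by rw [(mem_filter.1 hw).2]

end Descents

/-- Worpitzky's identity: `k^n = ∑_{i=1}^n A_{n,i} C(k+n-i, n)`. -/
theorem worpitzky (n k : ℕ) (hn : 1 ≤ n) :
    k ^ n = ∑ i ∈ Finset.Icc 1 n, eulerianNum n i * Nat.choose (k + n - i) n := by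
  obtain ⟨m, rfl⟩ := Nat.exists_eq_add_of_le' hn
  rw [pow_eq_sum_card_sort_eq, sum_congr rfl fun w _ => card_sort_eq k w,
    sum_comp_des fun d => (k + (m - d)).choose (m + 1)]
  refine sum_congr rfl fun i hi => ?_
  rw [smul_eq_mul, show k + (m - (i - 1)) = k + (m + 1) - i by have := mem_Icc.1 hi; omega]
end

section
/- For every n ≥ 1, the Eulerian numbers are unimodal: A_{n,1} ≤ A_{n,2} ≤ ⋯ ≤ A_{n,⌈n/2⌉} and A_{n,⌈n/2⌉} ≥ A_{n,⌈n/2⌉+1} ≥ ⋯ ≥ A_{n,n}. -/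
/-!
Inserting the largest letter into one of the `n + 1` gaps of a permutation of `Fin n` with `d`
descents keeps `d` descents if the gap is the last one or directly follows a descent (`d + 1`
gaps), and creates one more descent otherwise. This gives the recurrence
`A(n+1, k+2) = (k+2) A(n, k+2) + (n-k) A(n, k+1)`. Composing with `Fin.rev` exchanges descents
and ascents, so `A(n, k+1) = A(n, n-k)`. Monotonicity on the left half follows by induction on
`n` from the recurrence; at the centre the two sides of the inequality coincide by symmetry.
-/

open Finset Function Equiv

namespace Fin

variable {n : ℕ}

lemma val_succAbove (p : Fin (n + 1)) (j : Fin n) :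
    (p.succAbove j : ℕ) = if (j : ℕ) < p then (j : ℕ) else (j : ℕ) + 1 := by
  unfold succAbove
  split_ifs <;> simp_all [lt_def]

lemma val_succAbove_eq_succAbove_add_one_iff (p : Fin (n + 1)) (i j : Fin n) :
    (p.succAbove j : ℕ) = p.succAbove i + 1 ↔ (j : ℕ) = i + 1 ∧ (i : ℕ) + 1 ≠ p := by
  rw [val_succAbove, val_succAbove]
  split_ifs <;> omega

lemma insertNth_injective {α : Type*} {p : Fin (n + 1)} {a : α} {x : Fin n → α}
    (hx : Injective x) (ha : a ∉ Set.range x) : Injective (p.insertNth a x) := by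
  rw [← cons_comp_cycleRange]
  exact (cons_injective_iff.2 ⟨ha, hx⟩).comp p.cycleRange.injective

end Fin

section Descents

variable {α β : Type*} {n : ℕ}

def descents [LinearOrder α] (f : Fin n → α) : Finset (Fin n) :=
  {r | ∃ s : Fin n, (s : ℕ) = r + 1 ∧ f s < f r}

lemma mem_descents [LinearOrder α] {f : Fin n → α} {r : Fin n} :
    r ∈ descents f ↔ ∃ s : Fin n, (s : ℕ) = r + 1 ∧ f s < f r := by
  simp [descents]

lemma des_eq_card_descents (w : Perm (Fin n)) : des w = #(descents w) := rfl

lemma val_add_one_lt_of_mem_descents [LinearOrder α] {f : Fin n → α} {r : Fin n}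
    (hr : r ∈ descents f) : (r : ℕ) + 1 < n := by
  obtain ⟨s, hs, -⟩ := mem_descents.1 hr
  omega

lemma card_descents_add_card_descents_comp [LinearOrder α] [LinearOrder β] {f : Fin n → α}
    (hf : Injective f) {g : α → β} (hg : StrictAnti g) :
    #(descents f) + #(descents (g ∘ f)) = n - 1 := by
  have hsplit :
      descents f ∪ descents (g ∘ f) = ({r : Fin n | (r : ℕ) < n - 1} : Finset (Fin n)) := by
    ext r
    simp only [mem_union, mem_descents, mem_filter_univ, comp_apply, hg.lt_iff_gt]
    constructor
    · rintro (⟨s, hs, -⟩ | ⟨s, hs, -⟩) <;> omega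
    · intro hr
      obtain ⟨s, hs⟩ : ∃ s : Fin n, (s : ℕ) = r + 1 := ⟨⟨r + 1, by omega⟩, rfl⟩
      have hne : f s ≠ f r := hf.ne (by omega)
      rcases hne.lt_or_gt with h | h
      · exact .inl ⟨s, hs, h⟩
      · exact .inr ⟨s, hs, h⟩
  have hdisj : Disjoint (descents f) (descents (g ∘ f)) := by
    refine disjoint_left.2 fun r hr hr' => ?_
    obtain ⟨s, hs, h⟩ := mem_descents.1 hr
    obtain ⟨s', hs', h'⟩ := mem_descents.1 hr'
    obtain rfl : s' = s := Fin.ext (by omega)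
    exact (hg.lt_iff_gt.1 h').not_gt h
  rw [← card_union_of_disjoint hdisj, hsplit, Fin.card_filter_val_lt]
  omega

lemma descents_comp_strictMono [LinearOrder α] [LinearOrder β] {f : Fin n → α} {g : α → β}
    (hg : StrictMono g) : descents (g ∘ f) = descents f := by
  ext r
  simp only [mem_descents, comp_apply, hg.lt_iff_lt]

end Descents

section Insertion

variable {α : Type*} [LinearOrder α] {n : ℕ}

/-- Gap `p` of `x` lies just before position `p`, gap `Fin.last n` at the end. -/
def descentSlots (x : Fin n → α) : Finset (Fin (n + 1)) :=
  insert (Fin.last n) ((descents x).map (Fin.succEmb n))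

lemma card_descentSlots (x : Fin n → α) : #(descentSlots x) = #(descents x) + 1 := by
  rw [descentSlots, card_insert_of_notMem, card_map]
  simp only [mem_map, Fin.coe_succEmb, not_exists, not_and]
  intro j hj hlast
  have := val_add_one_lt_of_mem_descents hj
  rw [Fin.ext_iff, Fin.val_succ, Fin.val_last] at hlast
  omega

variable {a : α} {x : Fin n → α}

lemma descents_insertNth (hx : ∀ j, x j < a) (p : Fin (n + 1)) :
    descents (p.insertNth a x) =
      {j ∈ descents x | j.succ ≠ p}.map p.succAboveEmb ∪ if p = Fin.last n then ∅ else {p} := by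
  ext r
  rcases eq_or_ne r p with rfl | hr
  · have hr : r ∉ {j ∈ descents x | j.succ ≠ r}.map r.succAboveEmb := by simp [Fin.succAbove_ne]
    simp only [mem_union, hr, false_or, mem_descents, Fin.insertNth_apply_same]
    constructor
    · rintro ⟨s, hs, -⟩
      rw [if_neg (Fin.ne_last_of_lt (Fin.lt_def.2 (hs ▸ lt_add_one _)))]
      exact mem_singleton_self r
    · intro h
      have hlast : r ≠ Fin.last n := by rintro rfl; simp at h
      have hr' : (r : ℕ) < n := Fin.val_lt_last hlast
      obtain ⟨j, hj⟩ := Fin.exists_succAbove_eq (x := ⟨r + 1, by omega⟩) (y := r)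
        (by simp [Fin.ext_iff])
      refine ⟨⟨r + 1, by omega⟩, rfl, ?_⟩
      rw [← hj, Fin.insertNth_apply_succAbove]
      exact hx j
  · obtain ⟨i, rfl⟩ := Fin.exists_succAbove_eq hr
    have hp : p.succAbove i ∉ (if p = Fin.last n then ∅ else {p} : Finset (Fin (n + 1))) := by
      split_ifs <;> simp [Fin.succAbove_ne]
    rw [mem_union, or_iff_left hp, ← Fin.coe_succAboveEmb, mem_map', mem_filter, mem_descents,
      mem_descents]
    constructor
    · rintro ⟨s, hs, hlt⟩
      have hsp : s ≠ p := by
        rintro rfl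
        simp only [Fin.insertNth_apply_same, Fin.coe_succAboveEmb,
          Fin.insertNth_apply_succAbove] at hlt
        exact (hx i).not_gt hlt
      obtain ⟨j, rfl⟩ := Fin.exists_succAbove_eq hsp
      simp only [Fin.coe_succAboveEmb, Fin.insertNth_apply_succAbove] at hs hlt
      obtain ⟨hji, hip⟩ := (Fin.val_succAbove_eq_succAbove_add_one_iff p i j).1 hs
      exact ⟨⟨j, hji, hlt⟩, fun h => hip (by rw [← h, Fin.val_succ])⟩
    · rintro ⟨⟨j, hji, hlt⟩, hip⟩
      refine ⟨p.succAbove j, (Fin.val_succAbove_eq_succAbove_add_one_iff p i j).2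
        ⟨hji, fun h => hip (Fin.ext (by rw [Fin.val_succ, h]))⟩, ?_⟩
      simpa only [Fin.coe_succAboveEmb, Fin.insertNth_apply_succAbove] using hlt

lemma card_descents_insertNth (hx : ∀ j, x j < a) (p : Fin (n + 1)) :
    #(descents (p.insertNth a x)) =
      if p ∈ descentSlots x then #(descents x) else #(descents x) + 1 := by
  have hdisj : Disjoint ({j ∈ descents x | j.succ ≠ p}.map p.succAboveEmb)
      (if p = Fin.last n then ∅ else {p}) := by
    split_ifs <;> simp [Fin.succAbove_ne]
  rw [descents_insertNth hx, card_union_of_disjoint hdisj, card_map]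
  by_cases hslot : ∃ j ∈ descents x, j.succ = p
  · obtain ⟨j, hj, rfl⟩ := hslot
    have hfilter : {i ∈ descents x | i.succ ≠ j.succ} = (descents x).erase j := by
      simp only [ne_eq, Fin.succ_inj, filter_ne']
    have hlast : j.succ ≠ Fin.last n := by
      have := val_add_one_lt_of_mem_descents hj
      rw [Ne, Fin.ext_iff, Fin.val_succ, Fin.val_last]
      omega
    have hmem : j.succ ∈ descentSlots x := mem_insert_of_mem (mem_map_of_mem (Fin.succEmb n) hj)
    rw [hfilter, card_erase_of_mem hj, if_neg hlast, if_pos hmem, card_singleton]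
    have := card_pos.2 ⟨j, hj⟩
    omega
  · have hfilter : {i ∈ descents x | i.succ ≠ p} = descents x :=
      filter_true_of_mem fun i hi h => hslot ⟨i, hi, h⟩
    have hmem : p ∈ descentSlots x ↔ p = Fin.last n := by
      simp [descentSlots, hslot]
    rw [hfilter, if_congr hmem rfl rfl]
    split_ifs <;> simp

end Insertion

section InsertMax

variable {n : ℕ}

noncomputable def insertMax (σ : Perm (Fin n)) (p : Fin (n + 1)) : Perm (Fin (n + 1)) :=
  Equiv.ofBijective (p.insertNth (Fin.last n) (Fin.castSucc ∘ σ)) <|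
    Finite.injective_iff_bijective.1 <|
      Fin.insertNth_injective ((Fin.castSucc_injective n).comp σ.injective)
        (by simp)

lemma coe_insertMax (σ : Perm (Fin n)) (p : Fin (n + 1)) :
    ⇑(insertMax σ p) = p.insertNth (Fin.last n) (Fin.castSucc ∘ σ) := rfl

lemma insertMax_apply_self (σ : Perm (Fin n)) (p : Fin (n + 1)) :
    insertMax σ p p = Fin.last n := by
  rw [coe_insertMax, Fin.insertNth_apply_same]

lemma insertMax_bijective :
    Bijective fun q : Perm (Fin n) × Fin (n + 1) => insertMax q.1 q.2 := by
  refine (Fintype.bijective_iff_injective_and_card _).2 ⟨?_, ?_⟩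
  · rintro ⟨σ, p⟩ ⟨τ, q⟩ h
    simp only at h
    obtain rfl : p = q := (insertMax τ q).injective <| by
      rw [insertMax_apply_self, ← h, insertMax_apply_self]
    have h' := congrArg DFunLike.coe h
    rw [coe_insertMax, coe_insertMax] at h'
    have := Fin.insertNth_right_injective _ h'
    rw [Prod.mk.injEq, and_iff_left rfl]
    exact Equiv.ext fun j => Fin.castSucc_injective n (congrFun this j)
  · simp [Fintype.card_perm, Nat.factorial_succ, mul_comm]

lemma des_insertMax (σ : Perm (Fin n)) (p : Fin (n + 1)) :
    des (insertMax σ p) = if p ∈ descentSlots σ then des σ else des σ + 1 := by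
  have h := card_descents_insertNth (x := Fin.castSucc ∘ σ) (fun j => Fin.castSucc_lt_last _) p
  rwa [descents_comp_strictMono Fin.strictMono_castSucc] at h

lemma card_filter_des_insertMax (σ : Perm (Fin n)) (m : ℕ) :
    #{p | des (insertMax σ p) = m} =
      (if des σ = m then m + 1 else 0) + if des σ + 1 = m then n + 1 - m else 0 := by
  simp_rw [des_insertMax]
  rcases eq_or_ne (des σ) m with rfl | h₁
  · rw [filter_congr (q := (· ∈ descentSlots σ)) fun p _ => by split_ifs <;> simpa,
      filter_univ_mem, card_descentSlots]
    simp [des_eq_card_descents]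
  rcases eq_or_ne (des σ + 1) m with rfl | h₂
  · rw [filter_congr (q := (· ∉ descentSlots σ)) fun p _ => by split_ifs <;> simpa,
      filter_not, filter_univ_mem, ← compl_eq_univ_sdiff, card_compl, card_descentSlots]
    simp [des_eq_card_descents]
  · rw [filter_false_of_mem fun p _ => by split_ifs <;> assumption]
    simp [h₁, h₂]

end InsertMax

lemma eulerianNum_add_one (n k : ℕ) :
    eulerianNum n (k + 1) = #{w : Perm (Fin n) | des w = k} := rfl

lemma eulerianNum_succ_eq_sum (n m : ℕ) :
    eulerianNum (n + 1) (m + 1) = ∑ σ : Perm (Fin n), #{p | des (insertMax σ p) = m} := by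
  rw [eulerianNum_add_one, card_filter, ← (Equiv.ofBijective _ insertMax_bijective).sum_comp,
    Fintype.sum_prod_type]
  simp only [card_filter]
  rfl

lemma eulerianNum_succ_one (n : ℕ) : eulerianNum (n + 1) 1 = eulerianNum n 1 := by
  rw [eulerianNum_succ_eq_sum, eulerianNum_add_one]
  simp_rw [card_filter_des_insertMax]
  simp [sum_boole]

lemma eulerianNum_succ_succ (n k : ℕ) :
    eulerianNum (n + 1) (k + 2) =
      (k + 2) * eulerianNum n (k + 2) + (n - k) * eulerianNum n (k + 1) := by
  rw [eulerianNum_succ_eq_sum, eulerianNum_add_one, eulerianNum_add_one]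
  simp_rw [card_filter_des_insertMax]
  simp only [Nat.add_right_cancel_iff, Nat.reduceSubDiff, sum_add_distrib, ← sum_filter,
    sum_const, smul_eq_mul]
  ring

lemma des_add_des_revPerm_mul {n : ℕ} (w : Perm (Fin n)) :
    des w + des (Fin.revPerm * w) = n - 1 :=
  card_descents_add_card_descents_comp w.injective Fin.rev_strictAnti

lemma eulerianNum_symm {n k : ℕ} (hk : k < n) : eulerianNum n (k + 1) = eulerianNum n (n - k) :=
  card_equiv (Equiv.mulLeft Fin.revPerm) fun w => by
    have := des_add_des_revPerm_mul w
    simp only [mem_filter_univ, Equiv.coe_mulLeft]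
    omega

lemma eulerianNum_le_eulerianNum_succ :
    ∀ {n k : ℕ}, 2 * (k + 1) ≤ n → eulerianNum n (k + 1) ≤ eulerianNum n (k + 2)
  | 0, _, h => by omega
  | n + 1, 0, h => by
    rw [eulerianNum_succ_one, eulerianNum_succ_succ, Nat.sub_zero]
    exact le_add_left (Nat.le_mul_of_pos_left _ (by omega))
  | n + 1, k + 1, h => by
    rw [eulerianNum_succ_succ, eulerianNum_succ_succ]
    have hab : eulerianNum n (k + 1) ≤ eulerianNum n (k + 2) :=
      eulerianNum_le_eulerianNum_succ (by omega)
    by_cases hmid : 2 * (k + 2) ≤ n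
    · have hbc : eulerianNum n (k + 2) ≤ eulerianNum n (k + 3) :=
        eulerianNum_le_eulerianNum_succ hmid
      obtain ⟨d, rfl⟩ : ∃ d, n = k + 1 + d := ⟨n - (k + 1), by omega⟩
      rw [show k + 1 + d - k = d + 1 by omega, show k + 1 + d - (k + 1) = d by omega]
      nlinarith
    · have hca : eulerianNum n (k + 3) = eulerianNum n (k + 1) := by
        rw [eulerianNum_symm (k := k + 2) (by omega), show n - (k + 2) = k + 1 by omega]
      obtain rfl : n = 2 * k + 3 := by omega
      rw [hca, show 2 * k + 3 - k = k + 3 by omega, show 2 * k + 3 - (k + 1) = k + 2 by omega]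
      exact le_of_eq (by ring)

theorem eulerianNum_unimodal_general (n : ℕ) :
    (∀ i, 1 ≤ i → i < (n + 1) / 2 → eulerianNum n i ≤ eulerianNum n (i + 1)) ∧
    (∀ i, (n + 1) / 2 ≤ i → i < n → eulerianNum n (i + 1) ≤ eulerianNum n i) := by
  refine ⟨fun i hi hin => ?_, fun i hi hin => ?_⟩
  · obtain ⟨k, rfl⟩ : ∃ k, i = k + 1 := ⟨i - 1, by omega⟩
    exact eulerianNum_le_eulerianNum_succ (by omega)
  · obtain ⟨k, rfl⟩ : ∃ k, i = k + 1 := ⟨i - 1, by omega⟩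
    obtain ⟨j, hj⟩ : ∃ j, n = k + j + 2 := ⟨n - (k + 2), by omega⟩
    have h := eulerianNum_le_eulerianNum_succ (n := n) (k := j) (by omega)
    rwa [eulerianNum_symm hin, eulerianNum_symm (by omega), show n - (k + 1) = j + 1 by omega,
      show n - k = j + 2 by omega]

/-- Unimodality of the Eulerian numbers: they increase up to `i = ⌈n/2⌉`
(which is `(n+1)/2` in natural number arithmetic) and decrease afterwards. -/
theorem eulerianNum_unimodal (n : ℕ) (hn : 1 ≤ n) :
    (∀ i, 1 ≤ i → i < (n + 1) / 2 → eulerianNum n i ≤ eulerianNum n (i + 1)) ∧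
    (∀ i, (n + 1) / 2 ≤ i → i < n → eulerianNum n (i + 1) ≤ eulerianNum n i) :=
  eulerianNum_unimodal_general n
end

section
/- For every n ≥ 1, all roots of the n-th Eulerian polynomial A_n(t) are real, distinct, and nonpositive; in particular A_n(t) factors completely over the reals with distinct nonpositive roots. -/
/-- The `n`-th Eulerian polynomial `A_n(t) = ∑_{w ∈ S_n} t^{des(w)+1}`,
as a real polynomial. -/
noncomputable def eulerianPoly (n : ℕ) : Polynomial ℝ :=
  ∑ w : Equiv.Perm (Fin n), (Polynomial.X : Polynomial ℝ) ^ (des w + 1)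

/-!
Inserting the largest letter `n + 1` into the `n + 1` slots of a permutation of `[n]` keeps the
number of descents in the `des + 1` slots that end the word or split a descent, and adds one in
the others. This gives `A_{n+1} = t ((1 - t) A_n' + (n + 1) A_n)`. If `A_n` has simple roots
`0 = f_0 > f_1 > ⋯`, then `q = (1 - t) A_n' + (n + 1) A_n` is monic of degree `n`, its value
`(1 - f_k) A_n'(f_k)` at `f_k` has sign `(-1)^k`, and it has sign `(-1)^n` near `-∞`. So `q` has a
root in each gap between consecutive `f_k` and one left of them all, and `A_{n+1} = t q` again
has simple nonpositive roots.
-/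

open Finset Polynomial

section Descents

variable {α : Type*} [LinearOrder α]

-- A descent `a (r - 1) > a r` of the first `n` terms is indexed by its right end `r`.
def descentCount (a : ℕ → α) (n : ℕ) : ℕ :=
  #{r ∈ range n | 0 < r ∧ a r < a (r - 1)}

def insertAt (a : ℕ → α) (i : ℕ) (x : α) (r : ℕ) : α :=
  if r < i then a r else if r = i then x else a (r - 1)

-- Slot `i` is the gap in front of position `i`; inserting a letter larger than all `n` terms
-- there creates no new descent exactly when the slot is the last one or splits a descent.
abbrev IsDescentSlot (a : ℕ → α) (n i : ℕ) : Prop :=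
  i = n ∨ (0 < i ∧ a i < a (i - 1))

lemma descentCount_succ (a : ℕ → α) (n : ℕ) :
    descentCount a (n + 1) = descentCount a n + if 0 < n ∧ a n < a (n - 1) then 1 else 0 := by
  unfold descentCount
  rw [range_add_one, filter_insert]
  split_ifs with h
  · rw [card_insert_of_notMem (by simp)]
  · rfl

lemma descentCount_congr {a b : ℕ → α} {n : ℕ} (h : ∀ r < n, a r = b r) :
    descentCount a n = descentCount b n := by
  unfold descentCount
  congr 1
  refine filter_congr fun r hr => ?_
  rw [mem_range] at hr
  rw [h r hr, h (r - 1) (by omega)]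

lemma card_filter_isDescentSlot (a : ℕ → α) (n : ℕ) :
    #{i ∈ range (n + 1) | IsDescentSlot a n i} = descentCount a n + 1 := by
  rw [range_add_one, filter_insert, if_pos (Or.inl rfl), card_insert_of_notMem (by simp)]
  congr 2
  exact filter_congr fun i hi => by simp [(mem_range.mp hi).ne]

lemma descentCount_insertAt {a : ℕ → α} {x : α} {n : ℕ} (hx : ∀ r < n, a r < x) {i : ℕ}
    (hi : i ≤ n) :
    descentCount (insertAt a i x) (n + 1) =
      descentCount a n + if IsDescentSlot a n i then 0 else 1 := by
  induction n with
  | zero =>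
    obtain rfl : i = 0 := by omega
    simp [descentCount, IsDescentSlot]
  | succ n ih =>
    rw [descentCount_succ]
    rcases hi.eq_or_lt with rfl | hi
    · rw [descentCount_congr (b := a) fun r hr => by simp [insertAt, hr]]
      simp [insertAt, (hx n (by omega)).not_gt]
    · have h_succ : insertAt a i x (n + 1) = a n := by
        rw [insertAt, if_neg (by omega), if_neg (by omega), Nat.add_sub_cancel]
      rw [ih (fun r hr => hx r (by omega)) (by omega), descentCount_succ a n, h_succ]
      rcases (Nat.lt_succ_iff.mp hi).eq_or_lt with rfl | hi
      · simp [insertAt, IsDescentSlot, hx i (by omega)]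
        split_ifs <;> omega
      · have h_n : insertAt a i x n = a (n - 1) := by
          rw [insertAt, if_neg (by omega), if_neg (by omega)]
        have hin : i ≠ n + 1 := by omega
        simp only [IsDescentSlot, Nat.add_sub_cancel, h_n, show 0 < n by omega, Nat.succ_pos,
          true_and, hin, hi.ne, false_or]
        omega

end Descents

namespace Equiv.Perm

variable {n : ℕ}

-- Padded with `0` past `n`, so that `toSeq_insertMax` is an equality of functions.
def toSeq (w : Perm (Fin n)) (r : ℕ) : ℕ :=
  if h : r < n then w ⟨r, h⟩ else 0

@[simp] lemma toSeq_val (w : Perm (Fin n)) (j : Fin n) : w.toSeq j = w j := by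
  simp [toSeq]

lemma des_eq_descentCount (w : Perm (Fin n)) : des w = descentCount w.toSeq n := by
  rw [des, descentCount]
  refine card_bij (fun r _ => (r : ℕ) + 1) ?_ (fun _ _ _ _ h => Fin.ext (by simpa using h)) ?_
  · intro r hr
    obtain ⟨s, hs, hlt⟩ := (Finset.mem_filter.mp hr).2
    rw [Finset.mem_filter, Finset.mem_range, ← hs, show (s : ℕ) - 1 = r by omega, toSeq_val,
      toSeq_val]
    exact ⟨s.isLt, by omega, by exact_mod_cast hlt⟩
  · intro s hs
    obtain ⟨hsn, hs0, hlt⟩ := Finset.mem_filter.mp hs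
    rw [Finset.mem_range] at hsn
    have hs1 : s - 1 + 1 = s := by omega
    refine ⟨⟨s - 1, by omega⟩,
      Finset.mem_filter.mpr ⟨Finset.mem_univ _, ⟨s, hsn⟩, hs1.symm, ?_⟩, hs1⟩
    simpa [toSeq, hsn, show s - 1 < n by omega] using hlt

lemma des_le (w : Perm (Fin n)) : des w ≤ n :=
  (card_filter_le _ _).trans_eq (card_fin n)

-- The word of `v` with the letter `n` inserted at position `i`.
def insertMax (v : Perm (Fin n)) (i : Fin (n + 1)) : Perm (Fin (n + 1)) :=
  (finSuccEquiv' i).trans ((optionCongr v).trans (finSuccEquiv' (Fin.last n)).symm)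

@[simp] lemma insertMax_apply_self (v : Perm (Fin n)) (i : Fin (n + 1)) :
    insertMax v i i = Fin.last n := by
  simp [insertMax]

@[simp] lemma insertMax_apply_succAbove (v : Perm (Fin n)) (i : Fin (n + 1)) (j : Fin n) :
    insertMax v i (i.succAbove j) = (v j).castSucc := by
  simp [insertMax]

lemma toSeq_insertMax (v : Perm (Fin n)) (i : Fin (n + 1)) :
    (insertMax v i).toSeq = insertAt v.toSeq i n := by
  funext r
  by_cases hr : r < n + 1
  · obtain ⟨p, rfl⟩ : ∃ p : Fin (n + 1), (p : ℕ) = r := ⟨⟨r, hr⟩, rfl⟩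
    rcases Fin.eq_self_or_eq_succAbove i p with rfl | ⟨j, rfl⟩
    · simp [insertAt]
    · rw [toSeq_val, insertMax_apply_succAbove, Fin.val_castSucc]
      by_cases hj : j.castSucc < i
      · rw [Fin.succAbove_of_castSucc_lt _ _ hj]
        have hj' : (j : ℕ) < i := hj
        simp [insertAt, hj']
      · rw [Fin.succAbove_of_le_castSucc _ _ (not_lt.mp hj)]
        have : (i : ℕ) < j + 1 := by have : ¬ (j : ℕ) < i := hj; omega
        simp [insertAt, this.not_gt, this.ne']
  · have hi : (i : ℕ) < r := by omega
    simp [toSeq, insertAt, hr, hi.not_gt, hi.ne', show ¬ r - 1 < n by omega]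

lemma des_insertMax (v : Perm (Fin n)) (i : Fin (n + 1)) :
    des (insertMax v i) = des v + if IsDescentSlot v.toSeq n i then 0 else 1 := by
  rw [des_eq_descentCount, des_eq_descentCount, toSeq_insertMax]
  exact descentCount_insertAt (fun r hr => by simp [toSeq, hr]) (Nat.lt_succ_iff.mp i.isLt)

lemma insertMax_injective :
    Function.Injective fun p : Perm (Fin n) × Fin (n + 1) => insertMax p.1 p.2 := by
  rintro ⟨v, i⟩ ⟨v', i'⟩ h
  simp only at h
  obtain rfl : i = i' := (insertMax v' i').injective <| by
    rw [insertMax_apply_self, ← insertMax_apply_self v i, h]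
  have hv : ∀ j, v j = v' j := fun j => by
    simpa using congr($h (i.succAbove j))
  rw [Equiv.ext hv]

lemma sum_pow_des_insertMax {M : Type*} [Semiring M] (x : M) (v : Perm (Fin n)) :
    ∑ i : Fin (n + 1), x ^ (des (insertMax v i) + 1) =
      (des v + 1) • x ^ (des v + 1) + (n - des v) • x ^ (des v + 2) := by
  set slot := IsDescentSlot v.toSeq n
  have h_term : ∀ i : Fin (n + 1), x ^ (des (insertMax v i) + 1) =
      if slot i then x ^ (des v + 1) else x ^ (des v + 2) := fun i => by
    rw [des_insertMax]; split_ifs <;> rfl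
  have h_slots : #{k ∈ range (n + 1) | slot k} = des v + 1 := by
    rw [card_filter_isDescentSlot, des_eq_descentCount]
  have h_other : #{k ∈ range (n + 1) | ¬ slot k} = n - des v := by
    have := card_filter_add_card_filter_not (s := range (n + 1)) slot
    rw [h_slots, card_range] at this
    omega
  simp_rw [h_term]
  rw [Fin.sum_univ_eq_sum_range (fun k => if slot k then x ^ (des v + 1) else x ^ (des v + 2)),
    sum_ite, sum_const, sum_const, h_slots, h_other]

end Equiv.Perm

lemma eulerianPoly_succ (n : ℕ) :
    eulerianPoly (n + 1) =
      X * ((1 - X) * derivative (eulerianPoly n) + C ((n : ℝ) + 1) * eulerianPoly n) := by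
  have h_bij :
      Function.Bijective fun p : Equiv.Perm (Fin n) × Fin (n + 1) => p.1.insertMax p.2 := by
    refine (Fintype.bijective_iff_injective_and_card _).mpr ⟨Equiv.Perm.insertMax_injective, ?_⟩
    simp [Fintype.card_perm, Nat.factorial_succ, mul_comm]
  rw [eulerianPoly, ← Fintype.sum_bijective _ h_bij _ _ fun _ => rfl, Fintype.sum_prod_type]
  simp_rw [Equiv.Perm.sum_pow_des_insertMax, eulerianPoly, derivative_sum, Finset.mul_sum,
    ← Finset.sum_add_distrib, Finset.mul_sum]
  refine Finset.sum_congr rfl fun v _ => ?_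
  rw [derivative_X_pow, nsmul_eq_mul, nsmul_eq_mul, Nat.cast_sub v.des_le]
  simp only [Nat.add_sub_cancel, map_add, map_one, map_natCast, Nat.cast_add, Nat.cast_one]
  ring

namespace Polynomial

open Filter Asymptotics in
lemma Monic.exists_lt_neg_one_pow_mul_eval_pos {q : ℝ[X]} (hq : q.Monic) (b : ℝ) :
    ∃ t < b, 0 < (-1) ^ q.natDegree * q.eval t := by
  rcases Nat.eq_zero_or_pos q.natDegree with hd | hd
  · refine ⟨b - 1, by linarith, ?_⟩
    simp [eq_one_of_monic_natDegree_zero hq hd]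
  have h_equiv : (fun t : ℝ => (-1 : ℝ) ^ q.natDegree * q.eval t) ~[atBot]
      fun t : ℝ => (-1 : ℝ) ^ q.natDegree * t ^ q.natDegree :=
    IsEquivalent.refl.mul (by simpa [hq.leadingCoeff] using q.isEquivalent_atBot_lead)
  have h_tendsto := h_equiv.symm.tendsto_atTop <|
    ((tendsto_pow_atTop hd.ne').comp tendsto_neg_atBot_atTop).congr fun t => neg_pow t _
  exact ((h_tendsto.eventually_gt_atTop 0).and (eventually_lt_atBot b)).exists.imp
    fun t ht => ⟨ht.2, ht.1⟩

lemma exists_mem_Ioo_eval_eq_zero (p : ℝ[X]) {a b : ℝ} (hab : a < b)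
    (hsign : p.eval a * p.eval b < 0) : ∃ x ∈ Set.Ioo a b, p.eval x = 0 := by
  have hcont : ContinuousOn (fun x => p.eval x) (Set.Icc a b) := p.continuous.continuousOn
  rcases mul_neg_iff.mp hsign with ⟨ha, hb⟩ | ⟨ha, hb⟩
  · exact intermediate_value_Ioo' hab.le hcont ⟨hb, ha⟩
  · exact intermediate_value_Ioo hab.le hcont ⟨ha, hb⟩

lemma exists_roots_of_alternating_signs {q : ℝ[X]} {n : ℕ} {y : Fin (n + 1) → ℝ}
    (hy : StrictAnti y) (hsign : ∀ k : Fin (n + 1), 0 < (-1) ^ (k : ℕ) * q.eval (y k)) :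
    ∃ g : Fin n → ℝ, ∀ k, g k ∈ Set.Ioo (y k.succ) (y k.castSucc) ∧ q.eval (g k) = 0 := by
  have h_root (k : Fin n) : ∃ x ∈ Set.Ioo (y k.succ) (y k.castSucc), q.eval x = 0 := by
    refine q.exists_mem_Ioo_eval_eq_zero (hy k.castSucc_lt_succ) ?_
    have h := mul_pos (hsign k.castSucc) (hsign k.succ)
    rw [mul_mul_mul_comm, Fin.val_succ, Fin.val_castSucc, ← pow_add,
      Odd.neg_one_pow ⟨k, by ring⟩] at h
    linarith
  choose g hg_mem hg_root using h_root
  exact ⟨g, fun k => ⟨hg_mem k, hg_root k⟩⟩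

lemma IsMonicOfDegree.eq_prod_X_sub_C {R ι : Type*} [CommRing R] [IsDomain R] [Fintype ι]
    {q : R[X]} (hq : q.IsMonicOfDegree (Fintype.card ι)) {g : ι → R} (hg : g.Injective)
    (hroot : ∀ k, q.eval (g k) = 0) : q = ∏ k, (X - C (g k)) := by
  have hprod : (∏ k, (X - C (g k))).IsMonicOfDegree (Fintype.card ι) :=
    ⟨by simp, monic_prod_X_sub_C _ _⟩
  rcases (Fintype.card ι).eq_zero_or_pos with h0 | h0
  · rw [h0, isMonicOfDegree_zero_iff] at hq hprod
    rw [hq, hprod]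
  refine sub_eq_zero.mp <| eq_zero_of_natDegree_lt_card_of_eval_eq_zero _ hg (fun k => ?_)
    (hq.natDegree_sub_lt h0.ne' hprod)
  rw [eval_sub, hroot, eval_prod, prod_eq_zero (mem_univ k) (by simp), sub_zero]

lemma eval_derivative_prod_X_sub_C_self {R ι : Type*} [CommRing R] [Fintype ι] [DecidableEq ι]
    (f : ι → R) (k : ι) :
    (derivative (∏ j, (X - C (f j)))).eval (f k) = ∏ j ∈ univ.erase k, (f k - f j) := by
  rw [← mul_prod_erase univ _ (mem_univ k), derivative_mul, derivative_X_sub_C]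
  simp [eval_prod]

lemma coeff_one_sub_X_mul_derivative_add_C_mul {R : Type*} [CommRing R] (p : R[X]) (c : R)
    (j : ℕ) :
    ((1 - X) * derivative p + C c * p).coeff j =
      (j + 1) * p.coeff (j + 1) + (c - j) * p.coeff j := by
  rw [sub_mul, one_mul, coeff_add, coeff_sub, coeff_C_mul, coeff_derivative]
  cases j with
  | zero => simp
  | succ j => rw [coeff_X_mul, coeff_derivative]; push_cast; ring

lemma IsMonicOfDegree.one_sub_X_mul_derivative_add {R : Type*} [CommRing R] [Nontrivial R]
    {p : R[X]} {n : ℕ} (hp : p.IsMonicOfDegree n) :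
    ((1 - X) * derivative p + C ((n : R) + 1) * p).IsMonicOfDegree n := by
  have h_high : ∀ j, n < j → p.coeff j = 0 :=
    natDegree_le_iff_coeff_eq_zero.mp hp.natDegree_eq.le
  rw [isMonicOfDegree_iff, natDegree_le_iff_coeff_eq_zero,
    coeff_one_sub_X_mul_derivative_add_C_mul, h_high (n + 1) n.lt_succ_self,
    ((isMonicOfDegree_iff p n).mp hp).2]
  refine ⟨fun j hj => ?_, by ring⟩
  rw [coeff_one_sub_X_mul_derivative_add_C_mul, h_high j hj, h_high (j + 1) (by omega)]
  ring

end Polynomial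

lemma neg_one_pow_mul_prod_erase_sub_pos {n : ℕ} {f : Fin n → ℝ} (hf : StrictAnti f)
    (k : Fin n) :
    0 < (-1) ^ (k : ℕ) * ∏ j ∈ univ.erase k, (f k - f j) := by
  rw [← prod_filter_mul_prod_filter_not (univ.erase k) (· < k), ← mul_assoc]
  have h_lt : (univ.erase k).filter (· < k) = Iio k := by ext j; simpa using ne_of_lt
  refine mul_pos ?_ (prod_pos fun j hj => ?_)
  · rw [h_lt, ← Fin.card_Iio k, ← prod_neg]
    exact prod_pos fun j hj => neg_pos.mpr (sub_neg.mpr (hf (mem_Iio.mp hj)))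
  · simp only [mem_filter, mem_erase, mem_univ, and_true, not_lt] at hj
    exact sub_pos.mpr (hf (lt_of_le_of_ne hj.2 hj.1.symm))

lemma Fin.strictAnti_snoc {α : Type*} [Preorder α] {n : ℕ} {f : Fin n → α}
    (hf : StrictAnti f) {t : α} (ht : ∀ k, t < f k) :
    StrictAnti (Fin.snoc f t : Fin (n + 1) → α) := by
  intro a c hac
  induction c using Fin.lastCases with
  | last =>
    induction a using Fin.lastCases with
    | last => exact absurd hac (lt_irrefl _)
    | cast a => simpa using ht a
  | cast c =>
    induction a using Fin.lastCases with
    | last => exact absurd hac (not_lt.mpr (Fin.le_last _))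
    | cast a => simpa using hf (Fin.castSucc_lt_castSucc_iff.mp hac)

theorem exists_interlacing_roots {n : ℕ} {f : Fin n → ℝ} (hf : StrictAnti f)
    (hf_lt : ∀ k, f k < 1) :
    ∃ g : Fin n → ℝ, StrictAnti g ∧ (∀ k, g k < f k) ∧
      (1 - X) * derivative (∏ k, (X - C (f k))) + C ((n : ℝ) + 1) * ∏ k, (X - C (f k)) =
        ∏ k, (X - C (g k)) := by
  set p : ℝ[X] := ∏ k, (X - C (f k))
  set q := (1 - X) * derivative p + C ((n : ℝ) + 1) * p
  have hq : q.IsMonicOfDegree n :=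
    IsMonicOfDegree.one_sub_X_mul_derivative_add ⟨by simp [p], monic_prod_X_sub_C _ _⟩
  have h_at_roots : ∀ k : Fin n, 0 < (-1) ^ (k : ℕ) * q.eval (f k) := fun k => by
    have hp_root : p.eval (f k) = 0 := by
      rw [eval_prod, prod_eq_zero (mem_univ k) (by simp)]
    simp only [q, eval_add, eval_mul, hp_root, mul_zero, add_zero, eval_sub, eval_one, eval_X]
    simp only [p, eval_derivative_prod_X_sub_C_self]
    rw [mul_left_comm]
    exact mul_pos (sub_pos.mpr (hf_lt k)) (neg_one_pow_mul_prod_erase_sub_pos hf k)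
  obtain ⟨b, hb⟩ := Finite.bddBelow_range f
  obtain ⟨t, htb, ht⟩ := hq.monic.exists_lt_neg_one_pow_mul_eval_pos b
  rw [hq.natDegree_eq] at ht
  set y : Fin (n + 1) → ℝ := Fin.snoc f t
  have hy : StrictAnti y := Fin.strictAnti_snoc hf fun k => htb.trans_le (hb ⟨k, rfl⟩)
  have hy_sign : ∀ k : Fin (n + 1), 0 < (-1) ^ (k : ℕ) * q.eval (y k) := fun k => by
    induction k using Fin.lastCases with
    | last => simpa [y] using ht
    | cast k => simpa [y] using h_at_roots k
  obtain ⟨g, hg⟩ := exists_roots_of_alternating_signs hy hy_sign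
  have hg_anti : StrictAnti g := fun a c hac =>
    ((hg c).1.2.trans_le (hy.antitone (Fin.succ_le_castSucc_iff.mpr hac))).trans (hg a).1.1
  refine ⟨g, hg_anti, fun k => by simpa [y] using (hg k).1.2, ?_⟩
  exact IsMonicOfDegree.eq_prod_X_sub_C (by simpa using hq) hg_anti.injective fun k => (hg k).2

lemma eulerianPoly_zero : eulerianPoly 0 = X := by
  rw [eulerianPoly, Fintype.sum_unique, Nat.le_zero.mp (Equiv.Perm.des_le _), pow_one]

lemma exists_eulerianPoly_succ_eq_prod (m : ℕ) :
    ∃ f : Fin (m + 1) → ℝ, StrictAnti f ∧ (∀ k, f k ≤ 0) ∧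
      eulerianPoly (m + 1) = ∏ k, (X - C (f k)) := by
  induction m with
  | zero =>
    refine ⟨fun _ => 0, Subsingleton.strictAnti (α := Fin 1) _, fun _ => le_rfl, ?_⟩
    rw [eulerianPoly_succ, eulerianPoly_zero]
    simp
  | succ m ih =>
    obtain ⟨f, hf, hf_nonpos, hA⟩ := ih
    obtain ⟨g, hg, hgf, hq⟩ :=
      exists_interlacing_roots hf fun k => (hf_nonpos k).trans_lt one_pos
    refine ⟨Fin.cons 0 g, Fin.strictMono_cons (α := ℝᵒᵈ) |>.mpr
      ⟨fun k => (hgf k).trans_le (hf_nonpos k), hg⟩,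
      Fin.cases le_rfl fun k => ((hgf k).trans_le (hf_nonpos k)).le, ?_⟩
    rw [eulerianPoly_succ, hA, hq, Fin.prod_univ_succ (n := m + 1)]
    simp

/-- The `n`-th Eulerian polynomial factors completely over `ℝ` with `n`
distinct, nonpositive real roots. -/
theorem eulerianPoly_real_rooted (n : ℕ) (hn : 1 ≤ n) :
    ∃ (c : ℝ) (S : Finset ℝ), c ≠ 0 ∧ S.card = n ∧ (∀ x ∈ S, x ≤ 0) ∧
      eulerianPoly n =
        Polynomial.C c * ∏ x ∈ S, (Polynomial.X - Polynomial.C x) := by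
  obtain ⟨m, rfl⟩ : ∃ m, n = m + 1 := ⟨n - 1, by omega⟩
  obtain ⟨f, hf, hf_nonpos, hA⟩ := exists_eulerianPoly_succ_eq_prod m
  refine ⟨1, univ.map ⟨f, hf.injective⟩, one_ne_zero, by simp, by simpa using hf_nonpos, ?_⟩
  rw [map_one, one_mul, prod_map]
  exact hA
end

section
/- For every n ≥ 1, the following identity of formal power series in two variables s and t holds: A_n(s,t) = (1-s)^{n+1}·(1-t)^{n+1} · Σ_{k,l≥0} C(kl+n-1, n) s^k t^l, where A_n(s,t) = Σ_{w ∈ S_n} s^{des(w⁻¹)+1} t^{des(w)+1} is the n-th two-sided Eulerian polynomial. Equivalently, A_n(s,t) / ((1-s)^{n+1}(1-t)^{n+1}) = Σ_{k,l≥0} C(kl+n-1, n) s^k t^l. -/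
/-- The `n`-th two-sided Eulerian polynomial
`A_n(s,t) = ∑_{w ∈ S_n} s^{des(w⁻¹)+1} t^{des(w)+1}`, viewed as a formal
power series in two variables `s = X 0`, `t = X 1`. -/
noncomputable def twoSidedEulerian (n : ℕ) : MvPowerSeries (Fin 2) ℤ :=
  ∑ w : Equiv.Perm (Fin n),
    (MvPowerSeries.X 0 : MvPowerSeries (Fin 2) ℤ) ^ (des w⁻¹ + 1) *
      (MvPowerSeries.X 1 : MvPowerSeries (Fin 2) ℤ) ^ (des w + 1)

/-- The power series `∑_{k,l ≥ 0} C(kl+n-1, n) s^k t^l`, where `s = X 0` and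
`t = X 1`: its coefficient on the monomial `s^k t^l` is `C(kl+n-1, n)`. -/
def ballsInBoxesSeries (n : ℕ) : MvPowerSeries (Fin 2) ℤ :=
  fun d : Fin 2 →₀ ℕ => (Nat.choose (d 0 * d 1 + n - 1) n : ℤ)

open Finset

namespace MvPowerSeries

variable {σ R : Type*} [CommSemiring R]

theorem rename_const_powerSeries_X (i : σ) :
    rename (fun _ : Unit => i) (PowerSeries.X : PowerSeries R) = X i :=
  rename_X _ ()

theorem coeff_single_rename_const (F : PowerSeries R) (i : σ) (k : ℕ) :
    coeff (Finsupp.single i k) (rename (fun _ : Unit => i) F) = PowerSeries.coeff k F := by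
  have := coeff_embDomain_rename ⟨fun _ : Unit => i, fun _ _ _ => rfl⟩ F (Finsupp.single () k)
  rwa [Finsupp.embDomain_single] at this

theorem coeff_rename_const_eq_zero (F : PowerSeries R) {i j : σ} (hji : j ≠ i)
    {d : σ →₀ ℕ} (hd : d j ≠ 0) : coeff d (rename (fun _ : Unit => i) F) = 0 := by
  refine coeff_rename_eq_zero _ _ ?_
  rintro ⟨x, rfl⟩
  exact hd (Finsupp.mapDomain_of_notMem_range _ _ (by simpa using hji))

theorem coeff_rename_zero_mul_rename_one (F H : PowerSeries R) (d : Fin 2 →₀ ℕ) :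
    coeff d (rename (fun _ : Unit => (0 : Fin 2)) F * rename (fun _ : Unit => (1 : Fin 2)) H) =
      PowerSeries.coeff (d 0) F * PowerSeries.coeff (d 1) H := by
  have hsplit : ∀ e : Fin 2 →₀ ℕ, e = Finsupp.single 0 (e 0) + Finsupp.single 1 (e 1) := by
    intro e; ext i; fin_cases i <;> simp
  rw [coeff_mul, Finset.sum_eq_single (Finsupp.single 0 (d 0), Finsupp.single 1 (d 1))]
  · rw [coeff_single_rename_const, coeff_single_rename_const]
  · rintro ⟨e, e'⟩ he hne
    rw [Finset.HasAntidiagonal.mem_antidiagonal] at he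
    by_cases h1 : e 1 = 0
    · by_cases h0 : e' 0 = 0
      · refine absurd ?_ hne
        have he0 : e 0 = d 0 := by simpa [h0] using congrArg (· 0) he
        have he1 : e' 1 = d 1 := by simpa [h1] using congrArg (· 1) he
        rw [hsplit e, hsplit e', h1, h0, he0, he1]
        simp
      · rw [coeff_rename_const_eq_zero H (by decide) h0, mul_zero]
    · rw [coeff_rename_const_eq_zero F (by decide) h1, zero_mul]
  · intro h
    exact absurd (by rw [Finset.HasAntidiagonal.mem_antidiagonal, ← hsplit]) h

end MvPowerSeries

namespace PowerSeries

variable {R : Type*} [CommRing R]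

theorem coeff_invOneSubPow_mul_X_pow (m a k : ℕ) :
    coeff k ((invOneSubPow R (m + 2)).val * X ^ (a + 1)) = ((k - a + m).choose (m + 1) : R) := by
  rw [coeff_mul_X_pow', invOneSubPow_val_succ_eq_mk_add_choose, coeff_mk]
  split_ifs with h
  · congr 2; omega
  · rw [Nat.choose_eq_zero_of_lt (by omega), Nat.cast_zero]

theorem one_sub_X_pow_mul_rename_invOneSubPow {σ : Type*} (i : σ) (d : ℕ) :
    (1 - MvPowerSeries.X i) ^ d * MvPowerSeries.rename (fun _ : Unit => i) (invOneSubPow R d).val =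
      1 := by
  have := congrArg (MvPowerSeries.rename (fun _ : Unit => i)) (invOneSubPow R d).inv_val
  rwa [invOneSubPow_inv_eq_one_sub_pow, map_mul, map_pow, map_sub, map_one,
    MvPowerSeries.rename_const_powerSeries_X] at this

end PowerSeries

theorem card_filter_monotone (β : Type*) [LinearOrder β] [Fintype β] (n : ℕ) :
    #{f : Fin n → β | Monotone f} = (Fintype.card β + n - 1).choose n := by
  rw [← Nat.multichoose_eq, ← Sym.card_sym_eq_multichoose, ← card_univ]
  refine card_nbij' (fun f => ⟨(List.ofFn f : Multiset β), by simp⟩)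
    (fun s i => (s.1.sort (· ≤ ·))[(i : ℕ)]'(by simp)) (fun _ _ => mem_coe.2 (mem_univ _)) ?_ ?_ ?_
  · intro s _
    simp only [coe_filter, mem_univ, true_and]
    intro i j hij
    rcases hij.eq_or_lt with rfl | hlt
    · exact le_rfl
    · exact List.pairwise_iff_getElem.mp (Multiset.pairwise_sort _ _) _ _ _ _ hlt
  · intro f hf
    simp only [coe_filter, mem_univ, true_and] at hf
    have hsort : (List.ofFn f : Multiset β).sort (· ≤ ·) = List.ofFn f :=
      List.Perm.eq_of_pairwise' (Multiset.pairwise_sort _ _) hf.sortedLE_ofFn.pairwise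
        (by rw [← Multiset.coe_eq_coe, Multiset.sort_eq])
    funext i
    simp only [List.getElem_of_eq hsort, List.getElem_ofFn]
  · intro s _
    refine Subtype.ext ?_
    have hofFn : List.ofFn (fun i : Fin n => (s.1.sort (· ≤ ·))[(i : ℕ)]'(by simp)) =
        s.1.sort (· ≤ ·) :=
      List.ext_getElem (by simp) (by simp)
    simp only [hofFn, Multiset.sort_eq]

namespace Equiv.Perm

def descentSet {m : ℕ} (w : Perm (Fin (m + 1))) : Finset (Fin m) :=
  {i | w i.succ < w i.castSucc}

theorem mem_descentSet {m : ℕ} {w : Perm (Fin (m + 1))} {i : Fin m} :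
    i ∈ w.descentSet ↔ w i.succ < w i.castSucc := by
  simp [descentSet]

theorem des_eq_card_descentSet {m : ℕ} (w : Perm (Fin (m + 1))) : des w = #w.descentSet := by
  rw [des, ← card_map (s := w.descentSet) Fin.castSuccEmb]
  refine congrArg Finset.card (Finset.ext fun r => ?_)
  simp only [mem_filter, mem_univ, true_and, mem_map, Fin.coe_castSuccEmb, mem_descentSet]
  constructor
  · rintro ⟨s, hs, hlt⟩
    have hr : (r : ℕ) < m := by omega
    refine ⟨⟨r, hr⟩, ?_, rfl⟩
    rwa [show (⟨r, hr⟩ : Fin m).succ = s from Fin.ext (by simp [hs])]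
  · rintro ⟨i, hi, rfl⟩
    exact ⟨i.succ, by simp, hi⟩

end Equiv.Perm

section CompatibleMaps

variable {m : ℕ}

def compatibleMaps (β : Type*) [LinearOrder β] [Fintype β] (D : Finset (Fin m)) :
    Finset (Fin (m + 1) → β) :=
  {f | Monotone f ∧ ∀ i ∈ D, f i.castSucc < f i.succ}

def numBelow (D : Finset (Fin m)) (i : Fin (m + 1)) : ℕ :=
  #{j ∈ D | j.castSucc < i}

theorem numBelow_succ (D : Finset (Fin m)) (i : Fin m) :
    numBelow D i.succ = numBelow D i.castSucc + if i ∈ D then 1 else 0 := by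
  have hsplit : ({j ∈ D | j.castSucc < i.succ} : Finset (Fin m)) =
      {j ∈ D | j.castSucc < i.castSucc} ∪ {j ∈ D | j = i} := by
    ext j
    simp only [mem_filter, mem_union, Fin.lt_def, Fin.val_castSucc, Fin.val_succ]
    constructor
    · rintro ⟨hj, hlt⟩
      rcases Nat.lt_or_ge (j : ℕ) i with h | h
      · exact Or.inl ⟨hj, h⟩
      · exact Or.inr ⟨hj, Fin.ext (by omega)⟩
    · rintro (⟨hj, h⟩ | ⟨hj, rfl⟩) <;> exact ⟨hj, by omega⟩
  rw [numBelow, numBelow, hsplit, card_union_of_disjoint, filter_eq' D i]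
  · split_ifs <;> simp
  · refine disjoint_filter.2 fun j _ hlt heq => ?_
    simp [heq] at hlt

theorem numBelow_le_card (D : Finset (Fin m)) (i : Fin (m + 1)) : numBelow D i ≤ #D :=
  card_filter_le _ _

theorem numBelow_zero (D : Finset (Fin m)) : numBelow D 0 = 0 := by
  simp [numBelow]

theorem numBelow_last (D : Finset (Fin m)) : numBelow D (Fin.last m) = #D := by
  simp [numBelow, Fin.castSucc_lt_last]

theorem mem_compatibleMaps_iff {M : ℕ} {D : Finset (Fin m)} {f : Fin (m + 1) → Fin M} :
    f ∈ compatibleMaps (Fin M) D ↔ Monotone fun i => (f i : ℤ) - numBelow D i := by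
  simp only [compatibleMaps, mem_filter, mem_univ, true_and, Fin.monotone_iff_le_succ,
    numBelow_succ, Fin.le_def, Fin.lt_def]
  constructor
  · rintro ⟨hmono, hstrict⟩ i
    have := hmono i
    split_ifs with hi
    · have := hstrict i hi; push_cast; omega
    · push_cast; omega
  · intro h
    refine ⟨fun i => ?_, fun i hi => ?_⟩
    · have := h i; split_ifs at this <;> push_cast at this <;> omega
    · have := h i; rw [if_pos hi] at this; push_cast at this; omega

end CompatibleMaps

theorem card_compatibleMaps {m : ℕ} (M : ℕ) (D : Finset (Fin m)) :
    #(compatibleMaps (Fin M) D) = (M - #D + m).choose (m + 1) := by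
  have hbounds : ∀ f ∈ compatibleMaps (Fin M) D, ∀ i,
      numBelow D i ≤ f i ∧ (f i : ℕ) + #D < M + numBelow D i := by
    intro f hf i
    have hmono := mem_compatibleMaps_iff.1 hf
    have h0 := hmono (Fin.zero_le i)
    have hlast := hmono (Fin.le_last i)
    simp only [numBelow_zero, numBelow_last] at h0 hlast
    have := (f (Fin.last m)).isLt
    omega
  rw [show M - #D + m = Fintype.card (Fin (M - #D)) + (m + 1) - 1 by simp,
    ← card_filter_monotone]
  refine card_bij' (fun f hf i => ⟨f i - numBelow D i, by have := hbounds f hf i; omega⟩)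
    (fun g _ i => ⟨g i + numBelow D i, by have := numBelow_le_card D i; omega⟩)
    (fun f hf => ?_) (fun g hg => ?_) (fun f hf => ?_) (fun g _ => ?_)
  · simp only [mem_filter, mem_univ, true_and]
    intro i j hij
    have := mem_compatibleMaps_iff.1 hf hij
    simp only at this
    have := hbounds f hf i
    have := hbounds f hf j
    simp only [Fin.mk_le_mk]
    omega
  · simp only [mem_filter, mem_univ, true_and] at hg
    refine mem_compatibleMaps_iff.2 fun i j hij => ?_
    have := hg hij
    simp only [Fin.le_def] at this
    push_cast
    omega
  · funext i
    have := hbounds f hf i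
    ext
    simp only
    omega
  · funext i
    ext
    simp

section Standardization

open Equiv

variable {m : ℕ} {α β : Type*} {σ : Perm (Fin (m + 1))}

theorem fst_mem_compatibleMaps [LinearOrder α] [LinearOrder β] [Fintype α]
    {p : Fin (m + 1) → α ×ₗ β} (hp : Monotone p) (hσ : Tuple.sort (fun i => (ofLex (p i)).2) = σ) :
    (fun i => (ofLex (p i)).1) ∈ compatibleMaps α σ⁻¹.descentSet := by
  obtain ⟨hsorted, hstable⟩ := Tuple.eq_sort_iff.1 hσ.symm
  simp only [compatibleMaps, mem_filter, mem_univ, true_and]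
  refine ⟨Prod.Lex.monotone_fst_ofLex.comp hp, fun i hi => ?_⟩
  rw [Perm.mem_descentSet] at hi
  have hsnd : (ofLex (p i.succ)).2 ≤ (ofLex (p i.castSucc)).2 := by
    simpa using hsorted hi.le
  rcases Prod.Lex.toLex_le_toLex.1 (hp (Fin.castSucc_le_succ i)) with hlt | ⟨hfst, hle⟩
  · exact hlt
  · have := hstable _ _ hi (by simpa using le_antisymm hsnd hle)
    simp only [Perm.coe_inv, apply_symm_apply] at this
    exact absurd (Fin.castSucc_lt_succ (i := i)) this.not_gt

theorem snd_comp_mem_compatibleMaps [LinearOrder β] [Fintype β] {p : Fin (m + 1) → α ×ₗ β}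
    (hσ : Tuple.sort (fun i => (ofLex (p i)).2) = σ) :
    (fun i => (ofLex (p (σ i))).2) ∈ compatibleMaps β σ.descentSet := by
  obtain ⟨hsorted, hstable⟩ := Tuple.eq_sort_iff.1 hσ.symm
  simp only [compatibleMaps, mem_filter, mem_univ, true_and]
  refine ⟨hsorted, fun i hi => ?_⟩
  rw [Perm.mem_descentSet] at hi
  refine (hsorted (Fin.castSucc_le_succ i)).lt_of_ne fun heq => ?_
  exact absurd (hstable _ _ (Fin.castSucc_lt_succ (i := i)) heq) hi.not_gt

theorem monotone_toLex_of_mem_compatibleMaps [LinearOrder α] [LinearOrder β] [Fintype α]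
    [Fintype β] {a : Fin (m + 1) → α} {c : Fin (m + 1) → β}
    (ha : a ∈ compatibleMaps α σ⁻¹.descentSet) (hc : c ∈ compatibleMaps β σ.descentSet) :
    Monotone fun i => toLex (a i, c (σ⁻¹ i)) := by
  simp only [compatibleMaps, mem_filter, mem_univ, true_and] at ha hc
  refine Fin.monotone_iff_le_succ.2 fun i => Prod.Lex.toLex_le_toLex.2 ?_
  rcases (ha.1 (Fin.castSucc_le_succ i)).lt_or_eq with hlt | heq
  · exact Or.inl hlt
  · refine Or.inr ⟨heq, hc.1 (not_lt.1 fun hdes => ?_)⟩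
    exact (ha.2 i (Perm.mem_descentSet.2 hdes)).ne heq

theorem sort_comp_inv_eq_of_mem_compatibleMaps [LinearOrder β] [Fintype β] {c : Fin (m + 1) → β}
    (hc : c ∈ compatibleMaps β σ.descentSet) : Tuple.sort (fun i => c (σ⁻¹ i)) = σ := by
  simp only [compatibleMaps, mem_filter, mem_univ, true_and] at hc
  have hgraph : StrictMono fun i => toLex (c i, σ i) := by
    refine Fin.strictMono_iff_lt_succ.2 fun i => Prod.Lex.toLex_lt_toLex.2 ?_
    rcases (hc.1 (Fin.castSucc_le_succ i)).lt_or_eq with hlt | heq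
    · exact Or.inl hlt
    · refine Or.inr ⟨heq, lt_of_le_of_ne (not_lt.1 fun hdes => ?_) ?_⟩
      · exact (hc.2 i (Perm.mem_descentSet.2 hdes)).ne heq
      · exact σ.injective.ne (Fin.castSucc_lt_succ (i := i)).ne
  refine (Tuple.eq_sort_iff.2 ⟨by simpa [Function.comp_def] using hc.1, fun i j hij heq => ?_⟩).symm
  simp only [Perm.coe_inv, symm_apply_apply] at heq
  exact ((Prod.Lex.toLex_lt_toLex.1 (hgraph hij)).resolve_left heq.not_lt).2

variable [LinearOrder α] [LinearOrder β] [Fintype α] [Fintype β]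

theorem card_monotone_sort_snd_eq (σ : Perm (Fin (m + 1))) :
    #{p : Fin (m + 1) → α ×ₗ β | Monotone p ∧ Tuple.sort (fun i => (ofLex (p i)).2) = σ} =
      #(compatibleMaps α σ⁻¹.descentSet) * #(compatibleMaps β σ.descentSet) := by
  rw [← card_product]
  refine card_nbij' (fun p => (fun i => (ofLex (p i)).1, fun i => (ofLex (p (σ i))).2))
    (fun ac i => toLex (ac.1 i, ac.2 (σ⁻¹ i))) (fun p hp => ?_) (fun ac hac => ?_)
    (fun p _ => ?_) (fun ac _ => ?_)
  · simp only [coe_filter, mem_univ, true_and] at hp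
    exact mem_product.2 ⟨fst_mem_compatibleMaps hp.1 hp.2, snd_comp_mem_compatibleMaps hp.2⟩
  · obtain ⟨ha, hc⟩ := mem_product.1 hac
    simp only [coe_filter, mem_univ, true_and]
    exact ⟨monotone_toLex_of_mem_compatibleMaps ha hc, sort_comp_inv_eq_of_mem_compatibleMaps hc⟩
  · funext i
    simp
  · simp

theorem sum_card_mul_card_compatibleMaps :
    ∑ σ : Perm (Fin (m + 1)),
        #(compatibleMaps α σ⁻¹.descentSet) * #(compatibleMaps β σ.descentSet) =
      (Fintype.card α * Fintype.card β + m).choose (m + 1) := by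
  rw [show Fintype.card α * Fintype.card β + m = Fintype.card (α ×ₗ β) + (m + 1) - 1 by simp,
    ← card_filter_monotone, card_eq_sum_card_fiberwise
      (f := fun p => Tuple.sort (fun i => (ofLex (p i)).2)) (t := univ) (fun _ _ => mem_univ _)]
  refine sum_congr rfl fun σ _ => ?_
  rw [filter_filter, card_monotone_sort_snd_eq]

end Standardization

theorem sum_choose_mul_choose_des (m k l : ℕ) :
    ∑ w : Equiv.Perm (Fin (m + 1)),
        (k - des w⁻¹ + m).choose (m + 1) * (l - des w + m).choose (m + 1) =
      (k * l + m).choose (m + 1) := by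
  simp only [Equiv.Perm.des_eq_card_descentSet, ← card_compatibleMaps]
  simpa using sum_card_mul_card_compatibleMaps (α := Fin k) (β := Fin l)

open MvPowerSeries in
theorem ballsInBoxesSeries_eq_mul_twoSidedEulerian (m : ℕ) :
    ballsInBoxesSeries (m + 1) =
      rename (fun _ : Unit => (0 : Fin 2)) (PowerSeries.invOneSubPow ℤ (m + 2)).val *
        rename (fun _ : Unit => (1 : Fin 2)) (PowerSeries.invOneSubPow ℤ (m + 2)).val *
        twoSidedEulerian (m + 1) := by
  set g := (PowerSeries.invOneSubPow ℤ (m + 2)).val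
  have hterm : ∀ a b : ℕ, rename (fun _ : Unit => (0 : Fin 2)) g *
      rename (fun _ : Unit => (1 : Fin 2)) g * (X 0 ^ (a + 1) * X 1 ^ (b + 1)) =
      rename (fun _ : Unit => (0 : Fin 2)) (g * PowerSeries.X ^ (a + 1)) *
        rename (fun _ : Unit => (1 : Fin 2)) (g * PowerSeries.X ^ (b + 1)) := by
    intro a b
    simp only [map_mul, map_pow, rename_const_powerSeries_X]
    ring
  ext d
  simp only [twoSidedEulerian, mul_sum, hterm, map_sum, coeff_rename_zero_mul_rename_one, g,
    PowerSeries.coeff_invOneSubPow_mul_X_pow]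
  change (((d 0 * d 1 + (m + 1) - 1).choose (m + 1) : ℕ) : ℤ) = _
  rw [← add_assoc, Nat.add_sub_cancel, ← sum_choose_mul_choose_des]
  push_cast
  rfl

/-- The two-sided generating function:
`A_n(s,t) = (1-s)^{n+1} (1-t)^{n+1} ∑_{k,l ≥ 0} C(kl+n-1, n) s^k t^l`. -/
theorem twoSidedEulerian_generating_function (n : ℕ) (hn : 1 ≤ n) :
    twoSidedEulerian n =
      (1 - MvPowerSeries.X 0 : MvPowerSeries (Fin 2) ℤ) ^ (n + 1) *
        (1 - MvPowerSeries.X 1 : MvPowerSeries (Fin 2) ℤ) ^ (n + 1) *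
        ballsInBoxesSeries n := by
  obtain ⟨m, rfl⟩ : ∃ m, n = m + 1 := ⟨n - 1, by omega⟩
  have hs := PowerSeries.one_sub_X_pow_mul_rename_invOneSubPow (R := ℤ) (0 : Fin 2) (m + 2)
  have ht := PowerSeries.one_sub_X_pow_mul_rename_invOneSubPow (R := ℤ) (1 : Fin 2) (m + 2)
  rw [ballsInBoxesSeries_eq_mul_twoSidedEulerian]
  linear_combination (-twoSidedEulerian (m + 1) * (1 - MvPowerSeries.X 1) ^ (m + 2) *
      MvPowerSeries.rename (fun _ : Unit => (1 : Fin 2)) (PowerSeries.invOneSubPow ℤ (m + 2)).val)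
      * hs - twoSidedEulerian (m + 1) * ht
end
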